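/- arXiv:math/9805133 — 12 statements merged into one kernel-verified Lean document; each statement's English description precedes it below -/
import Mathlib

section
/- Let g be a Lie algebra over ℂ and let r : g → g be a linear operator satisfying the modified classical Yang–Baxter equation [r x, r y] − r([r x, y] + [x, r y]) = −[x, y] for all x, y ∈ g. Then the bracket [x, y]_* := (1/2)([r x, y] + [x, r y]) is bilinear, antisymmetric, and satisfies the Jacobi identity; hence it defines a second Lie algebra structure (denoted g*) on the underlying vector space of g. -/
/-- If `r : g → g` satisfies the modified classical Yang–Baxter equation,
then the dual bracket `[x,y]_* = (1/2)([r x, y] + [x, r y])` is bilinear, antisymmetric and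
satisfies the Jacobi identity, hence defines a second Lie algebra structure `g*` on `g`. -/
theorem dual_bracket_is_lie_bracket
    {g : Type*} [LieRing g] [LieAlgebra ℂ g]
    (r : g →ₗ[ℂ] g)
    (hCYBE : ∀ x y : g, ⁅r x, r y⁆ - r (⁅r x, y⁆ + ⁅x, r y⁆) = -⁅x, y⁆) :
    let br : g → g → g := fun x y => ((1 : ℂ)/2) • (⁅r x, y⁆ + ⁅x, r y⁆)
    -- bilinearity
    (∀ (a : ℂ) (x x' y : g), br (a • x + x') y = a • br x y + br x' y) ∧
    (∀ (a : ℂ) (x y y' : g), br x (a • y + y') = a • br x y + br x y') ∧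
    -- antisymmetry
    (∀ x y : g, br x y = - br y x) ∧
    -- Jacobi identity
    (∀ x y z : g, br x (br y z) + br y (br z x) + br z (br x y) = 0) := by
  have hr : ∀ x y : g, r (⁅r x, y⁆ + ⁅x, r y⁆) = ⁅r x, r y⁆ + ⁅x, y⁆ := by
    intro x y
    have := hCYBE x y
    linear_combination (norm := module) -this
  intro br
  refine ⟨?_, ?_, ?_, ?_⟩
  · intro a x x' y
    simp only [br, map_add, map_smul, add_lie, smul_lie, lie_add, lie_smul]
    module
  · intro a x y y'
    simp only [br, map_add, map_smul, add_lie, smul_lie, lie_add, lie_smul]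
    module
  · intro x y
    have h1 : ⁅r x, y⁆ = -⁅y, r x⁆ := (lie_skew _ _).symm
    have h2 : ⁅x, r y⁆ = -⁅r y, x⁆ := (lie_skew _ _).symm
    simp only [br]
    rw [h1, h2]
    module
  · intro x y z
    have J1 := lie_jacobi (r x) (r y) z
    have J2 := lie_jacobi (r x) y (r z)
    have J3 := lie_jacobi x (r y) (r z)
    have J4 := lie_jacobi x y z
    have h2 : ∀ u v : g, r ⁅r u, v⁆ + r ⁅u, r v⁆ = ⁅r u, r v⁆ + ⁅u, v⁆ := by
      intro u v; rw [← map_add]; exact hr u v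
    have K1 : ⁅x, r ⁅r y, z⁆⁆ + ⁅x, r ⁅y, r z⁆⁆ = ⁅x, ⁅r y, r z⁆⁆ + ⁅x, ⁅y, z⁆⁆ := by
      rw [← lie_add, ← lie_add, h2]
    have K2 : ⁅y, r ⁅r z, x⁆⁆ + ⁅y, r ⁅z, r x⁆⁆ = ⁅y, ⁅r z, r x⁆⁆ + ⁅y, ⁅z, x⁆⁆ := by
      rw [← lie_add, ← lie_add, h2]
    have K3 : ⁅z, r ⁅r x, y⁆⁆ + ⁅z, r ⁅x, r y⁆⁆ = ⁅z, ⁅r x, r y⁆⁆ + ⁅z, ⁅x, y⁆⁆ := by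
      rw [← lie_add, ← lie_add, h2]
    simp only [br, map_smul, map_add, smul_add, lie_smul, smul_lie, hr, lie_add, add_lie]
    linear_combination (norm := module) ((1:ℂ)/4) • J1 + ((1:ℂ)/4) • J2 +
      ((1:ℂ)/4) • J3 + ((1:ℂ)/4) • J4 + ((1:ℂ)/4) • K1 + ((1:ℂ)/4) • K2 + ((1:ℂ)/4) • K3
end

section
/- Let g be a Lie algebra over ℂ with a nondegenerate symmetric invariant bilinear form ⟨·,·⟩, and let r : g → g be skew-symmetric (⟨r x, y⟩ = −⟨x, r y⟩) and satisfy the modified classical Yang–Baxter equation. Set r_± = (1/2)(r ± id). Then: (a) r_± are Lie algebra homomorphisms from g* (the space g with bracket [x, y]_* = (1/2)([r x, y] + [x, r y])) to g, i.e. r_±([x, y]_*) = [r_± x, r_± y] for all x, y; (b) ⟨r_+ x, y⟩ = −⟨x, r_− y⟩ for all x, y (i.e. r_+^* = −r_−); (c) r_+ − r_− = id. -/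
/-- For a factorizable Lie bialgebra `(g, r)` (with `r` skew-symmetric with
respect to a nondegenerate symmetric invariant form `B`, satisfying the modified classical
Yang–Baxter equation), the operators `r_± = (1/2)(r ± id)` satisfy:
(a) they are Lie algebra homomorphisms from `g*` (with the dual bracket) to `g`;
(b) `⟨r_+ x, y⟩ = −⟨x, r_− y⟩`, i.e. `r_+^* = −r_−`;
(c) `r_+ − r_− = id`. -/
theorem rpm_properties
    {g : Type*} [LieRing g] [LieAlgebra ℂ g]
    (B : g →ₗ[ℂ] g →ₗ[ℂ] ℂ)
    (hBsymm : ∀ x y : g, B x y = B y x)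
    (hBnondeg : ∀ x : g, (∀ y : g, B x y = 0) → x = 0)
    (hBinv : ∀ x y z : g, B ⁅x, y⁆ z = B x ⁅y, z⁆)
    (r : g →ₗ[ℂ] g)
    (hrskew : ∀ x y : g, B (r x) y = - B x (r y))
    (hCYBE : ∀ x y : g, ⁅r x, r y⁆ - r (⁅r x, y⁆ + ⁅x, r y⁆) = -⁅x, y⁆) :
    let br : g → g → g := fun x y => ((1 : ℂ)/2) • (⁅r x, y⁆ + ⁅x, r y⁆)
    let rp : g →ₗ[ℂ] g := ((1 : ℂ)/2) • (r + LinearMap.id)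
    let rm : g →ₗ[ℂ] g := ((1 : ℂ)/2) • (r - LinearMap.id)
    -- (a) r_± are Lie algebra homomorphisms g* → g
    (∀ x y : g, rp (br x y) = ⁅rp x, rp y⁆) ∧
    (∀ x y : g, rm (br x y) = ⁅rm x, rm y⁆) ∧
    -- (b) r_+^* = −r_−
    (∀ x y : g, B (rp x) y = - B x (rm y)) ∧
    -- (c) r_+ − r_− = id
    (∀ x : g, rp x - rm x = x) := by
  intro br rp rm
  have key : ∀ x y : g, r (⁅r x, y⁆ + ⁅x, r y⁆) = ⁅r x, r y⁆ + ⁅x, y⁆ := by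
    intro x y
    have := hCYBE x y
    linear_combination (norm := module) -this
  refine ⟨?_, ?_, ?_, ?_⟩
  · intro x y
    simp only [br, rp, LinearMap.smul_apply, LinearMap.add_apply, LinearMap.id_apply,
      map_smul, lie_add, add_lie, lie_smul, smul_lie]
    linear_combination (norm := module) ((1:ℂ)/4) • key x y
  · intro x y
    simp only [br, rm, LinearMap.smul_apply, LinearMap.sub_apply, LinearMap.id_apply,
      map_smul, lie_add, add_lie, sub_lie, lie_sub, lie_smul, smul_lie]
    linear_combination (norm := module) ((1:ℂ)/4) • key x y
  · intro x y
    simp only [rp, rm, LinearMap.smul_apply, LinearMap.add_apply, LinearMap.sub_apply,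
      LinearMap.id_apply, map_smul, map_add, map_sub, smul_eq_mul]
    rw [hrskew]
    ring
  · intro x
    simp only [rp, rm, LinearMap.smul_apply, LinearMap.add_apply, LinearMap.sub_apply,
      LinearMap.id_apply]
    module
end

section
/- With the factorizable Lie bialgebra hypotheses, the maps X ↦ (r_+ X, r_− X) from g* to d = g ⊕ g (with componentwise Lie bracket) and X ↦ (X, X) from g to d are injective Lie algebra homomorphisms. -/
/-- For a factorizable Lie bialgebra, the maps `X ↦ (r_+ X, r_− X)` from `g*`
to `d = g ⊕ g` (with componentwise Lie bracket) and `X ↦ (X, X)` from `g` to `d` are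
injective Lie algebra homomorphisms. -/
theorem embeddings_into_double
    {g : Type*} [LieRing g] [LieAlgebra ℂ g]
    (B : g →ₗ[ℂ] g →ₗ[ℂ] ℂ)
    (hBsymm : ∀ x y : g, B x y = B y x)
    (hBnondeg : ∀ x : g, (∀ y : g, B x y = 0) → x = 0)
    (hBinv : ∀ x y z : g, B ⁅x, y⁆ z = B x ⁅y, z⁆)
    (r : g →ₗ[ℂ] g)
    (hrskew : ∀ x y : g, B (r x) y = - B x (r y))
    (hCYBE : ∀ x y : g, ⁅r x, r y⁆ - r (⁅r x, y⁆ + ⁅x, r y⁆) = -⁅x, y⁆) :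
    let br : g → g → g := fun x y => ((1 : ℂ)/2) • (⁅r x, y⁆ + ⁅x, r y⁆)
    let rp : g →ₗ[ℂ] g := ((1 : ℂ)/2) • (r + LinearMap.id)
    let rm : g →ₗ[ℂ] g := ((1 : ℂ)/2) • (r - LinearMap.id)
    -- the componentwise Lie bracket of d = g ⊕ g
    let brD : g × g → g × g → g × g := fun u v => (⁅u.1, v.1⁆, ⁅u.2, v.2⁆)
    -- the embedding of g*
    let ι : g → g × g := fun X => (rp X, rm X)
    -- the diagonal embedding of g
    let δ : g → g × g := fun X => (X, X)
    -- ι is an injective Lie algebra homomorphism g* → d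
    Function.Injective ι ∧
    (∀ X Y : g, ι (br X Y) = brD (ι X) (ι Y)) ∧
    -- δ is an injective Lie algebra homomorphism g → d
    Function.Injective δ ∧
    (∀ X Y : g, δ ⁅X, Y⁆ = brD (δ X) (δ Y)) := by
  intro br rp rm brD ι δ
  have hC : ∀ x y : g, ⁅r x, r y⁆ = r ⁅r x, y⁆ + r ⁅x, r y⁆ - ⁅x, y⁆ := by
    intro x y
    have h := hCYBE x y
    rw [map_add, sub_eq_iff_eq_add] at h
    rw [h]; abel
  have hid : ∀ x : g, rp x - rm x = x := by
    intro x
    simp only [rp, rm, LinearMap.smul_apply, LinearMap.add_apply, LinearMap.sub_apply,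
      LinearMap.id_apply]
    module
  refine ⟨?_, ?_, ?_, ?_⟩
  · intro X Y h
    have h1 : rp X = rp Y := congrArg Prod.fst h
    have h2 : rm X = rm Y := congrArg Prod.snd h
    rw [← hid X, ← hid Y, h1, h2]
  · intro X Y
    have hc := hC X Y
    simp only [ι, brD, br, rp, rm, LinearMap.smul_apply, LinearMap.add_apply,
      LinearMap.sub_apply, LinearMap.id_apply, map_smul, map_add, Prod.mk.injEq]
    constructor
    · rw [smul_lie, lie_smul, add_lie, lie_add, lie_add, hc]; module
    · rw [smul_lie, lie_smul, sub_lie, lie_sub, lie_sub, hc]; module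
  · intro X Y h
    exact congrArg Prod.fst h
  · intro X Y
    rfl
end

section
/- With the factorizable Lie bialgebra hypotheses, equip d = g ⊕ g with the bilinear form ⟨⟨(x, x'), (y, y')⟩⟩ = ⟨x, y⟩ − ⟨x', y'⟩. Then: (a) ⟨⟨·,·⟩⟩ is symmetric, nondegenerate, and invariant for the componentwise bracket; (b) the diagonal subalgebra Δg = {(X, X) : X ∈ g} and the subalgebra g* = {(r_+ X, r_− X) : X ∈ g} are both isotropic with respect to ⟨⟨·,·⟩⟩; (c) d decomposes as the direct sum of vector subspaces d = Δg ⊕ g*, i.e. every (x, x') ∈ g ⊕ g is uniquely of the form (η, η) + (r_+ ξ, r_− ξ) with η, ξ ∈ g. (Thus (d, g, g*) is a Manin triple.) -/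
/-- `(d, g, g*)` is a Manin triple.  Equip `d = g ⊕ g` with the form
`⟨⟨(x,x'),(y,y')⟩⟩ = ⟨x,y⟩ − ⟨x',y'⟩`.  Then (a) this form is symmetric, nondegenerate and
invariant for the componentwise bracket; (b) the diagonal `Δg` and
`g* = {(r_+X, r_−X)}` are isotropic; (c) `d = Δg ⊕ g*` as vector spaces: every element of
`g ⊕ g` is uniquely `(η,η) + (r_+ξ, r_−ξ)`. -/
theorem manin_triple_of_double
    {g : Type*} [LieRing g] [LieAlgebra ℂ g]
    (B : g →ₗ[ℂ] g →ₗ[ℂ] ℂ)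
    (hBsymm : ∀ x y : g, B x y = B y x)
    (hBnondeg : ∀ x : g, (∀ y : g, B x y = 0) → x = 0)
    (hBinv : ∀ x y z : g, B ⁅x, y⁆ z = B x ⁅y, z⁆)
    (r : g →ₗ[ℂ] g)
    (hrskew : ∀ x y : g, B (r x) y = - B x (r y))
    (hCYBE : ∀ x y : g, ⁅r x, r y⁆ - r (⁅r x, y⁆ + ⁅x, r y⁆) = -⁅x, y⁆) :
    let rp : g →ₗ[ℂ] g := ((1 : ℂ)/2) • (r + LinearMap.id)
    let rm : g →ₗ[ℂ] g := ((1 : ℂ)/2) • (r - LinearMap.id)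
    -- the componentwise Lie bracket of d = g ⊕ g
    let brD : g × g → g × g → g × g := fun u v => (⁅u.1, v.1⁆, ⁅u.2, v.2⁆)
    -- the scalar product on d
    let BB : g × g → g × g → ℂ := fun u v => B u.1 v.1 - B u.2 v.2
    -- (a) symmetric, nondegenerate, invariant
    (∀ u v : g × g, BB u v = BB v u) ∧
    (∀ u : g × g, (∀ v : g × g, BB u v = 0) → u = 0) ∧
    (∀ u v w : g × g, BB (brD u v) w = BB u (brD v w)) ∧
    -- (b) the diagonal subalgebra and g* are isotropic
    (∀ X Y : g, BB (X, X) (Y, Y) = 0) ∧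
    (∀ X Y : g, BB (rp X, rm X) (rp Y, rm Y) = 0) ∧
    -- (c) direct sum decomposition d = Δg ⊕ g*
    (∀ u : g × g, ∃! w : g × g, u = ((w.1, w.1) : g × g) + (rp w.2, rm w.2)) := by
  intro rp rm brD BB
  have hrp : ∀ x : g, rp x = ((1:ℂ)/2) • (r x + x) := fun x => by simp [rp]
  have hrm : ∀ x : g, rm x = ((1:ℂ)/2) • (r x - x) := fun x => by simp [rm]
  refine ⟨?_, ?_, ?_, ?_, ?_, ?_⟩
  · intro u v
    simp only [BB, hBsymm u.1 v.1, hBsymm u.2 v.2]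
  · intro u hu
    have h1 : u.1 = 0 := by
      apply hBnondeg
      intro y
      have := hu (y, 0)
      simpa [BB] using this
    have h2 : u.2 = 0 := by
      apply hBnondeg
      intro y
      have := hu (0, y)
      simp only [BB, map_zero, LinearMap.zero_apply, zero_sub, neg_eq_zero] at this
      exact this
    exact Prod.ext h1 h2
  · intro u v w
    simp only [BB, brD, hBinv]
  · intro X Y
    simp [BB]
  · intro X Y
    simp only [BB, hrp, hrm, map_smul, map_add, map_sub, LinearMap.smul_apply,
      LinearMap.add_apply, LinearMap.sub_apply, smul_eq_mul]
    linear_combination ((1:ℂ)/2) * hrskew X Y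
  · intro u
    refine ⟨(u.1 - rp (u.1 - u.2), u.1 - u.2), ?_, ?_⟩
    · have : rm (u.1 - u.2) = rp (u.1 - u.2) - (u.1 - u.2) := by
        simp [hrp, hrm, smul_sub, smul_add]
        module
      refine Prod.ext ?_ ?_
      · simp
      · simp [this]
    · rintro ⟨a, b⟩ hab
      have h1 : u.1 = a + rp b := congrArg Prod.fst hab
      have h2 : u.2 = a + rm b := congrArg Prod.snd hab
      have hdiff : u.1 - u.2 = b := by
        rw [h1, h2]
        simp only [hrp, hrm]
        module
      refine Prod.ext ?_ ?_
      · show a = u.1 - rp (u.1 - u.2)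
        rw [hdiff, h1]
        abel
      · exact hdiff.symm
end

section
/- With the factorizable Lie bialgebra hypotheses, define the operator r_d on d = g ⊕ g by r_d(x, x') = (r x − 2 r_+ x', 2 r_− x − r x'). Then r_d is skew-symmetric with respect to the form ⟨⟨(x, x'), (y, y')⟩⟩ = ⟨x, y⟩ − ⟨x', y'⟩ and satisfies the modified classical Yang–Baxter equation on d: [r_d u, r_d v] − r_d([r_d u, v] + [u, r_d v]) = −[u, v] for all u, v ∈ d. (Thus (d, d*) is again a factorizable Lie bialgebra.) -/
/-- The operator `r_d(x,x') = (r x − 2 r_+ x', 2 r_− x − r x')` on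
`d = g ⊕ g` is skew-symmetric with respect to the form
`⟨⟨(x,x'),(y,y')⟩⟩ = ⟨x,y⟩ − ⟨x',y'⟩` and satisfies the modified classical Yang–Baxter
equation for the componentwise bracket; thus `(d, d*)` is again a factorizable
Lie bialgebra. -/
theorem r_double_factorizable
    {g : Type*} [LieRing g] [LieAlgebra ℂ g]
    (B : g →ₗ[ℂ] g →ₗ[ℂ] ℂ)
    (hBsymm : ∀ x y : g, B x y = B y x)
    (hBnondeg : ∀ x : g, (∀ y : g, B x y = 0) → x = 0)
    (hBinv : ∀ x y z : g, B ⁅x, y⁆ z = B x ⁅y, z⁆)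
    (r : g →ₗ[ℂ] g)
    (hrskew : ∀ x y : g, B (r x) y = - B x (r y))
    (hCYBE : ∀ x y : g, ⁅r x, r y⁆ - r (⁅r x, y⁆ + ⁅x, r y⁆) = -⁅x, y⁆) :
    let rp : g →ₗ[ℂ] g := ((1 : ℂ)/2) • (r + LinearMap.id)
    let rm : g →ₗ[ℂ] g := ((1 : ℂ)/2) • (r - LinearMap.id)
    -- the componentwise Lie bracket of d = g ⊕ g
    let brD : g × g → g × g → g × g := fun u v => (⁅u.1, v.1⁆, ⁅u.2, v.2⁆)
    -- the scalar product on d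
    let BB : g × g → g × g → ℂ := fun u v => B u.1 v.1 - B u.2 v.2
    -- the r-matrix of the double
    let rd : g × g → g × g := fun u => (r u.1 - 2 • rp u.2, 2 • rm u.1 - r u.2)
    -- skew symmetry
    (∀ u v : g × g, BB (rd u) v = - BB u (rd v)) ∧
    -- modified classical Yang--Baxter equation on d
    (∀ u v : g × g,
      brD (rd u) (rd v) - rd (brD (rd u) v + brD u (rd v)) = - brD u v) := by
  intro rp rm brD BB rd
  have h2p : ∀ z : g, 2 • rp z = r z + z := by
    intro z
    simp only [rp, LinearMap.smul_apply, LinearMap.add_apply, LinearMap.id_apply]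
    module
  have h2m : ∀ z : g, 2 • rm z = r z - z := by
    intro z
    simp only [rm, LinearMap.smul_apply, LinearMap.sub_apply, LinearMap.id_apply]
    module
  have key : ∀ x y : g, ⁅r x, r y⁆ = r ⁅r x, y⁆ + r ⁅x, r y⁆ - ⁅x, y⁆ := by
    intro x y
    have := hCYBE x y
    rw [map_add] at this
    linear_combination (norm := abel) this
  constructor
  · intro u v
    simp only [BB, rd, h2p, h2m, map_sub, map_add, LinearMap.sub_apply, LinearMap.add_apply]
    linear_combination hrskew u.1 v.1 - hrskew u.2 v.1 - hrskew u.1 v.2 + hrskew u.2 v.2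
  · intro u v
    simp only [brD, rd, h2p, h2m, Prod.mk_add_mk, Prod.mk_sub_mk, Prod.neg_mk]
    refine Prod.ext ?_ ?_ <;>
    · simp only [lie_sub, sub_lie, lie_add, add_lie, map_sub, map_add, key]
      abel
end

section
/- (Belavin–Drinfeld, part (i)) With the factorizable Lie bialgebra hypotheses, set b_± = Im r_±, n_+ = Ker r_−, n_− = Ker r_+. Then: (a) b_± are Lie subalgebras of g; (b) n_± ⊆ b_±, and n_± is a Lie ideal of b_±; (c) the orthogonal complement of b_± in g with respect to ⟨·,·⟩ equals n_±, i.e. {x ∈ g : ⟨x, r_± y⟩ = 0 for all y ∈ g} = Ker r_∓. -/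
/-- Belavin–Drinfeld, part (i): For a factorizable Lie bialgebra with
`r_± = (1/2)(r ± id)`, `b_± = Im r_±`, `n_+ = Ker r_−`, `n_− = Ker r_+`:
(a) `b_±` are Lie subalgebras of `g`;
(b) `n_± ⊆ b_±` and `n_±` is a Lie ideal of `b_±`;
(c) the orthogonal complement of `b_±` equals `n_±`, i.e.
`{x : ⟨x, r_± y⟩ = 0 ∀ y} = Ker r_∓`. -/
theorem belavin_drinfeld_i
    {g : Type*} [LieRing g] [LieAlgebra ℂ g]
    (B : g →ₗ[ℂ] g →ₗ[ℂ] ℂ)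
    (hBsymm : ∀ x y : g, B x y = B y x)
    (hBnondeg : ∀ x : g, (∀ y : g, B x y = 0) → x = 0)
    (hBinv : ∀ x y z : g, B ⁅x, y⁆ z = B x ⁅y, z⁆)
    (r : g →ₗ[ℂ] g)
    (hrskew : ∀ x y : g, B (r x) y = - B x (r y))
    (hCYBE : ∀ x y : g, ⁅r x, r y⁆ - r (⁅r x, y⁆ + ⁅x, r y⁆) = -⁅x, y⁆) :
    let rp : g →ₗ[ℂ] g := ((1 : ℂ)/2) • (r + LinearMap.id)
    let rm : g →ₗ[ℂ] g := ((1 : ℂ)/2) • (r - LinearMap.id)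
    -- (a) b_± = Im r_± are Lie subalgebras of g
    (∀ x y : g, x ∈ LinearMap.range rp → y ∈ LinearMap.range rp →
      ⁅x, y⁆ ∈ LinearMap.range rp) ∧
    (∀ x y : g, x ∈ LinearMap.range rm → y ∈ LinearMap.range rm →
      ⁅x, y⁆ ∈ LinearMap.range rm) ∧
    -- (b) n_± ⊆ b_± and n_± is a Lie ideal of b_±
    ((LinearMap.ker rm : Set g) ⊆ (LinearMap.range rp : Set g)) ∧
    ((LinearMap.ker rp : Set g) ⊆ (LinearMap.range rm : Set g)) ∧
    (∀ x y : g, x ∈ LinearMap.range rp → y ∈ LinearMap.ker rm →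
      ⁅x, y⁆ ∈ LinearMap.ker rm) ∧
    (∀ x y : g, x ∈ LinearMap.range rm → y ∈ LinearMap.ker rp →
      ⁅x, y⁆ ∈ LinearMap.ker rp) ∧
    -- (c) orthogonal complements: b_±^⊥ = n_±
    ({x : g | ∀ y : g, B x (rp y) = 0} = (LinearMap.ker rm : Set g)) ∧
    ({x : g | ∀ y : g, B x (rm y) = 0} = (LinearMap.ker rp : Set g)) := by
  intro rp rm
  have hrp : ∀ x : g, rp x = ((1:ℂ)/2) • (r x + x) := fun x => by
    simp [rp, LinearMap.smul_apply, LinearMap.add_apply]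
  have hrm : ∀ x : g, rm x = ((1:ℂ)/2) • (r x - x) := fun x => by
    simp [rm, LinearMap.smul_apply, LinearMap.sub_apply]
  have hcy : ∀ x y : g, ⁅r x, r y⁆ = r ⁅r x, y⁆ + r ⁅x, r y⁆ - ⁅x, y⁆ := by
    intro x y
    have h := hCYBE x y
    rw [map_add, sub_eq_iff_eq_add] at h
    rw [h]; abel
  -- (a)
  have ha1 : ∀ x y : g, x ∈ LinearMap.range rp → y ∈ LinearMap.range rp →
      ⁅x, y⁆ ∈ LinearMap.range rp := by
    rintro _ _ ⟨a, rfl⟩ ⟨b, rfl⟩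
    refine ⟨⁅rp a, b⁆ + ⁅a, rp b⁆ - ⁅a, b⁆, ?_⟩
    rw [hrp (⁅rp a, b⁆ + ⁅a, rp b⁆ - ⁅a, b⁆)]
    simp only [map_add, map_sub, map_smul, lie_add, add_lie, smul_lie, lie_smul,
      lie_sub, sub_lie, hrp, hcy]
    module
  have ha2 : ∀ x y : g, x ∈ LinearMap.range rm → y ∈ LinearMap.range rm →
      ⁅x, y⁆ ∈ LinearMap.range rm := by
    rintro _ _ ⟨a, rfl⟩ ⟨b, rfl⟩
    refine ⟨⁅rm a, b⁆ + ⁅a, rm b⁆ + ⁅a, b⁆, ?_⟩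
    rw [hrm (⁅rm a, b⁆ + ⁅a, rm b⁆ + ⁅a, b⁆)]
    simp only [map_add, map_sub, map_smul, lie_add, add_lie, smul_lie, lie_smul,
      lie_sub, sub_lie, hrm, hcy]
    module
  -- kernels in terms of r
  have hkerm : ∀ x : g, rm x = 0 ↔ r x = x := by
    intro x
    rw [hrm]
    constructor
    · intro h
      have h2 : r x - x = 0 := by
        rcases smul_eq_zero.mp h with h' | h'
        · norm_num at h'
        · exact h'
      exact sub_eq_zero.mp h2
    · intro h; rw [h]; simp
  have hkerp : ∀ x : g, rp x = 0 ↔ r x = -x := by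
    intro x
    rw [hrp]
    constructor
    · intro h
      have h2 : r x + x = 0 := by
        rcases smul_eq_zero.mp h with h' | h'
        · norm_num at h'
        · exact h'
      exact eq_neg_of_add_eq_zero_left h2
    · intro h; rw [h]; simp
  -- orthogonality characterizations
  have horthp : ∀ v : g, (∀ z : g, B v (rp z) = 0) ↔ rm v = 0 := by
    intro v
    constructor
    · intro h
      rw [hkerm]
      apply sub_eq_zero.mp
      apply hBnondeg
      intro y
      have h1 := h y
      rw [hrp, map_smul, smul_eq_zero] at h1
      have h2 : B v (r y) + B v y = 0 := by
        rcases h1 with h' | h'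
        · norm_num at h'
        · simpa using h'
      have h3 : B (r v) y = - B v (r y) := hrskew v y
      have h4 : B (r v - v) y = B (r v) y - B v y := by simp
      rw [h4]
      linear_combination h3 - h2
    · intro h y
      have hx : r v = v := (hkerm v).mp h
      have h1 := hrskew v y
      rw [hx] at h1
      rw [hrp, map_smul, smul_eq_zero]
      right
      rw [map_add]
      linear_combination h1
  have horthm : ∀ v : g, (∀ z : g, B v (rm z) = 0) ↔ rp v = 0 := by
    intro v
    constructor
    · intro h
      rw [hkerp]
      apply eq_neg_of_add_eq_zero_left
      apply hBnondeg
      intro y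
      have h1 := h y
      rw [hrm, map_smul, smul_eq_zero] at h1
      have h2 : B v (r y) - B v y = 0 := by
        rcases h1 with h' | h'
        · norm_num at h'
        · simpa using h'
      have h3 : B (r v) y = - B v (r y) := hrskew v y
      have h4 : B (r v + v) y = B (r v) y + B v y := by simp
      rw [h4]
      linear_combination h3 - h2
    · intro h y
      have hx : r v = -v := (hkerp v).mp h
      have h1 := hrskew v y
      rw [hx] at h1
      rw [hrm, map_smul, smul_eq_zero]
      right
      rw [map_sub]
      have h2 : B (-v) y = - B v y := by simp
      rw [h2] at h1
      linear_combination h1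
  -- (b) inclusions
  have hb1 : (LinearMap.ker rm : Set g) ⊆ (LinearMap.range rp : Set g) := by
    intro x hx
    simp only [SetLike.mem_coe, LinearMap.mem_ker] at hx
    have hrx : r x = x := (hkerm x).mp hx
    refine ⟨x, ?_⟩
    rw [hrp, hrx]
    module
  have hb2 : (LinearMap.ker rp : Set g) ⊆ (LinearMap.range rm : Set g) := by
    intro x hx
    simp only [SetLike.mem_coe, LinearMap.mem_ker] at hx
    have hrx : r x = -x := (hkerp x).mp hx
    refine ⟨-x, ?_⟩
    rw [hrm, map_neg, hrx]
    module
  -- (b) ideals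
  have hi1 : ∀ x y : g, x ∈ LinearMap.range rp → y ∈ LinearMap.ker rm →
      ⁅x, y⁆ ∈ LinearMap.ker rm := by
    intro x y hx hy
    rw [LinearMap.mem_ker] at hy ⊢
    rw [← horthp] at hy ⊢
    intro z
    obtain ⟨u, hu⟩ := ha1 x (rp z) hx ⟨z, rfl⟩
    have h1 : B ⁅y, x⁆ (rp z) = B y ⁅x, rp z⁆ := hBinv y x (rp z)
    have h2 : (⁅x, y⁆ : g) = -⁅y, x⁆ := by rw [← lie_skew]
    rw [h2, map_neg, LinearMap.neg_apply, h1, ← hu, hy u, neg_zero]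
  have hi2 : ∀ x y : g, x ∈ LinearMap.range rm → y ∈ LinearMap.ker rp →
      ⁅x, y⁆ ∈ LinearMap.ker rp := by
    intro x y hx hy
    rw [LinearMap.mem_ker] at hy ⊢
    rw [← horthm] at hy ⊢
    intro z
    obtain ⟨u, hu⟩ := ha2 x (rm z) hx ⟨z, rfl⟩
    have h1 : B ⁅y, x⁆ (rm z) = B y ⁅x, rm z⁆ := hBinv y x (rm z)
    have h2 : (⁅x, y⁆ : g) = -⁅y, x⁆ := by rw [← lie_skew]
    rw [h2, map_neg, LinearMap.neg_apply, h1, ← hu, hy u, neg_zero]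
  refine ⟨ha1, ha2, hb1, hb2, hi1, hi2, ?_, ?_⟩
  · ext x
    simp only [Set.mem_setOf_eq, SetLike.mem_coe, LinearMap.mem_ker]
    exact horthp x
  · ext x
    simp only [Set.mem_setOf_eq, SetLike.mem_coe, LinearMap.mem_ker]
    exact horthm x
end

section
/- (Belavin–Drinfeld, part (ii)) With the factorizable Lie bialgebra hypotheses, the map θ_r : b_−/n_− → b_+/n_+ that sends the residue class of r_−(X) modulo n_− to the residue class of r_+(X) modulo n_+ (for X ∈ g) is well defined (in particular, if r_−(X) ∈ n_− then r_+(X) ∈ n_+), and is an isomorphism of Lie algebras from b_−/n_− onto b_+/n_+, where n_± is regarded as a Lie ideal of b_±. Moreover θ_r is unitary with respect to the induced scalar products: ⟨r_+ X, r_+ Y⟩ = ⟨r_− X, r_− Y⟩ for all X, Y ∈ g. -/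
/-- Belavin–Drinfeld, part (ii): The map
`θ_r : b_−/n_− → b_+/n_+`, sending the class of `r_− X` mod `n_−` to the class of
`r_+ X` mod `n_+`, is well defined and a Lie algebra isomorphism, unitary for the induced
scalar products.  Here `n_+ = Ker r_−` and `n_− = Ker r_+`, so membership in `n_+` (resp.
`n_−`) is expressed as `r_− a = 0` (resp. `r_+ a = 0`), and all assertions about the
quotients are stated on representatives. -/
theorem belavin_drinfeld_ii
    {g : Type*} [LieRing g] [LieAlgebra ℂ g]
    (B : g →ₗ[ℂ] g →ₗ[ℂ] ℂ)
    (hBsymm : ∀ x y : g, B x y = B y x)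
    (hBnondeg : ∀ x : g, (∀ y : g, B x y = 0) → x = 0)
    (hBinv : ∀ x y z : g, B ⁅x, y⁆ z = B x ⁅y, z⁆)
    (r : g →ₗ[ℂ] g)
    (hrskew : ∀ x y : g, B (r x) y = - B x (r y))
    (hCYBE : ∀ x y : g, ⁅r x, r y⁆ - r (⁅r x, y⁆ + ⁅x, r y⁆) = -⁅x, y⁆) :
    let rp : g →ₗ[ℂ] g := ((1 : ℂ)/2) • (r + LinearMap.id)
    let rm : g →ₗ[ℂ] g := ((1 : ℂ)/2) • (r - LinearMap.id)
    -- θ_r is well defined: if r_− X ∈ n_− then r_+ X ∈ n_+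
    (∀ X : g, rp (rm X) = 0 → rm (rp X) = 0) ∧
    -- θ_r is injective: if r_+ X ∈ n_+ then r_− X ∈ n_−
    (∀ X : g, rm (rp X) = 0 → rp (rm X) = 0) ∧
    -- θ_r is surjective onto b_+/n_+: every class in b_+/n_+ is hit
    (∀ u : g, u ∈ LinearMap.range rp → ∃ X : g, rm (rp X - u) = 0) ∧
    -- θ_r is a Lie algebra homomorphism: it sends the class of ⁅r_− X, r_− Y⁆
    -- (the bracket of the classes of r_− X and r_− Y in b_−/n_−) to the class of
    -- ⁅r_+ X, r_+ Y⁆ in b_+/n_+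
    (∀ X Y : g, ∃ Z : g,
      rp (rm Z - ⁅rm X, rm Y⁆) = 0 ∧ rm (rp Z - ⁅rp X, rp Y⁆) = 0) ∧
    -- θ_r is unitary with respect to the induced scalar products
    (∀ X Y : g, B (rp X) (rp Y) = B (rm X) (rm Y)) := by

  intro rp rm
  have hcomm : ∀ X : g, rp (rm X) = rm (rp X) := by
    intro X
    simp only [rp, rm, LinearMap.smul_apply, LinearMap.add_apply, LinearMap.sub_apply,
      LinearMap.id_apply, map_smul, map_add, map_sub]
    module
  have hZ : ∀ X Y : g,
      rm (((1:ℂ)/2) • (⁅r X, Y⁆ + ⁅X, r Y⁆)) = ⁅rm X, rm Y⁆ ∧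
      rp (((1:ℂ)/2) • (⁅r X, Y⁆ + ⁅X, r Y⁆)) = ⁅rp X, rp Y⁆ := by
    intro X Y
    have h := hCYBE X Y
    rw [sub_eq_iff_eq_add, map_add] at h
    constructor <;>
    · simp only [rp, rm, LinearMap.smul_apply, LinearMap.add_apply, LinearMap.sub_apply,
        LinearMap.id_apply, map_smul, map_add, map_sub, smul_lie, lie_smul, add_lie,
        lie_add, sub_lie, lie_sub, h]
      module
  refine ⟨fun X h => by rw [← hcomm, h], fun X h => by rw [hcomm, h], ?_, ?_, ?_⟩
  · rintro u ⟨X, rfl⟩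
    exact ⟨X, by simp⟩
  · intro X Y
    exact ⟨((1:ℂ)/2) • (⁅r X, Y⁆ + ⁅X, r Y⁆),
      by rw [(hZ X Y).1]; simp, by rw [(hZ X Y).2]; simp⟩
  · intro X Y
    simp only [rp, rm, LinearMap.smul_apply, LinearMap.add_apply, LinearMap.sub_apply,
      LinearMap.id_apply, map_smul, map_add, map_sub, LinearMap.smul_apply, smul_eq_mul]
    linear_combination ((1:ℂ)/2) * hrskew X Y
end

section
/- With the factorizable Lie bialgebra hypotheses, the image of the embedding g* → g ⊕ g, X ↦ (r_+ X, r_− X), admits the following description: a pair (u, v) ∈ g ⊕ g lies in this image if and only if r_+(u − v) = u; equivalently, if and only if u ∈ b_+, v ∈ b_−, and the class of u modulo n_+ equals θ_r applied to the class of v modulo n_−. -/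
/-- The image of the embedding `g* → g ⊕ g`, `X ↦ (r_+ X, r_− X)`:
a pair `(u,v)` lies in the image iff `r_+(u − v) = u`; equivalently iff `u ∈ b_+`,
`v ∈ b_−`, and the class of `u` mod `n_+` equals `θ_r` applied to the class of `v`
mod `n_−` (i.e. there is `X` with `r_− X ≡ v` mod `n_−` and `r_+ X ≡ u` mod `n_+`,
where `n_+ = Ker r_−`, `n_− = Ker r_+`). -/
theorem image_of_dual_embedding
    {g : Type*} [LieRing g] [LieAlgebra ℂ g]
    (B : g →ₗ[ℂ] g →ₗ[ℂ] ℂ)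
    (hBsymm : ∀ x y : g, B x y = B y x)
    (hBnondeg : ∀ x : g, (∀ y : g, B x y = 0) → x = 0)
    (hBinv : ∀ x y z : g, B ⁅x, y⁆ z = B x ⁅y, z⁆)
    (r : g →ₗ[ℂ] g)
    (hrskew : ∀ x y : g, B (r x) y = - B x (r y))
    (hCYBE : ∀ x y : g, ⁅r x, r y⁆ - r (⁅r x, y⁆ + ⁅x, r y⁆) = -⁅x, y⁆) :
    let rp : g →ₗ[ℂ] g := ((1 : ℂ)/2) • (r + LinearMap.id)
    let rm : g →ₗ[ℂ] g := ((1 : ℂ)/2) • (r - LinearMap.id)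
    ∀ u v : g,
      -- first description
      ((∃ X : g, rp X = u ∧ rm X = v) ↔ rp (u - v) = u) ∧
      -- second (equivalent) description via the Belavin--Drinfeld isomorphism θ_r
      ((∃ X : g, rp X = u ∧ rm X = v) ↔
        (u ∈ LinearMap.range rp ∧ v ∈ LinearMap.range rm ∧
          ∃ X : g, rp (rm X - v) = 0 ∧ rm (rp X - u) = 0)) := by
  intro rp rm u v
  have hdiff : ∀ x : g, rp x - rm x = x := by
    intro x
    simp only [rp, rm, LinearMap.smul_apply, LinearMap.add_apply, LinearMap.sub_apply,
      LinearMap.id_apply]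
    module
  have hcomm : ∀ x : g, rp (rm x) = rm (rp x) := by
    intro x
    simp only [rp, rm, LinearMap.smul_apply, LinearMap.add_apply, LinearMap.sub_apply,
      LinearMap.id_apply, map_smul, map_add, map_sub]
    module
  constructor
  · constructor
    · rintro ⟨X, hX1, hX2⟩
      rw [← hX1, ← hX2, hdiff]
    · intro h
      refine ⟨u - v, h, ?_⟩
      have h2 := hdiff (u - v)
      rw [h] at h2
      exact sub_right_injective h2
  · constructor
    · rintro ⟨X, h1, h2⟩
      exact ⟨⟨X, h1⟩, ⟨X, h2⟩, X, by rw [h2, sub_self, map_zero],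
        by rw [h1, sub_self, map_zero]⟩
    · rintro ⟨-, -, X, hX1, hX2⟩
      have e1 : rp (rm X) = rp v := by
        rw [map_sub] at hX1; exact sub_eq_zero.mp hX1
      have e2 : rm (rp X) = rm u := by
        rw [map_sub] at hX2; exact sub_eq_zero.mp hX2
      have key : rp v = rm u := by rw [← e1, hcomm, e2]
      refine ⟨u - v, ?_, ?_⟩
      · rw [map_sub, key]; exact hdiff u
      · rw [map_sub, ← key]; exact hdiff v
end

section
/- With the factorizable Lie bialgebra hypotheses, the canonical pairing between b_− and b_+ given by (u, r_+ Y)_+ := ⟨u, Y⟩ for u ∈ b_−, Y ∈ g is well defined (i.e. if r_+ Y = r_+ Y' then ⟨u, Y⟩ = ⟨u, Y'⟩ for every u ∈ b_−) and is a nondegenerate bilinear pairing b_− × b_+ → ℂ: if u ∈ b_− satisfies ⟨u, Y⟩ = 0 for all Y ∈ g then u = 0, and if Y ∈ g satisfies ⟨u, Y⟩ = 0 for all u ∈ b_− then r_+ Y = 0. -/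
/-- The canonical pairing between `b_−` and `b_+` given by
`(u, r_+ Y)_+ := ⟨u, Y⟩` for `u ∈ b_−`, `Y ∈ g`, is well defined and nondegenerate. -/
theorem canonical_pairing_nondegenerate
    {g : Type*} [LieRing g] [LieAlgebra ℂ g]
    (B : g →ₗ[ℂ] g →ₗ[ℂ] ℂ)
    (hBsymm : ∀ x y : g, B x y = B y x)
    (hBnondeg : ∀ x : g, (∀ y : g, B x y = 0) → x = 0)
    (hBinv : ∀ x y z : g, B ⁅x, y⁆ z = B x ⁅y, z⁆)
    (r : g →ₗ[ℂ] g)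
    (hrskew : ∀ x y : g, B (r x) y = - B x (r y))
    (hCYBE : ∀ x y : g, ⁅r x, r y⁆ - r (⁅r x, y⁆ + ⁅x, r y⁆) = -⁅x, y⁆) :
    let rp : g →ₗ[ℂ] g := ((1 : ℂ)/2) • (r + LinearMap.id)
    let rm : g →ₗ[ℂ] g := ((1 : ℂ)/2) • (r - LinearMap.id)
    -- well-definedness: the value ⟨u, Y⟩ only depends on r_+ Y, for u ∈ b_−
    (∀ u : g, u ∈ LinearMap.range rm →
      ∀ Y Y' : g, rp Y = rp Y' → B u Y = B u Y') ∧
    -- nondegeneracy in the first argument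
    (∀ u : g, u ∈ LinearMap.range rm → (∀ Y : g, B u Y = 0) → u = 0) ∧
    -- nondegeneracy in the second argument
    (∀ Y : g, (∀ u : g, u ∈ LinearMap.range rm → B u Y = 0) → rp Y = 0) := by
  intro rp rm
  have key : ∀ x y : g, B (rm x) y = - B x (rp y) := by
    intro x y
    simp only [rp, rm, LinearMap.smul_apply, LinearMap.add_apply, LinearMap.sub_apply,
      LinearMap.id_apply, map_smul, LinearMap.smul_apply, map_sub, map_add,
      LinearMap.sub_apply, smul_eq_mul]
    rw [hrskew]
    ring
  refine ⟨?_, ?_, ?_⟩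
  · rintro u ⟨x, rfl⟩ Y Y' h
    have : B (rm x) (Y - Y') = 0 := by
      rw [key, map_sub, h, sub_self, map_zero, neg_zero]
    have h2 : B (rm x) Y - B (rm x) Y' = 0 := by rw [← map_sub]; exact this
    exact sub_eq_zero.mp h2
  · intro u _ h
    exact hBnondeg u h
  · intro Y h
    apply hBnondeg
    intro x
    rw [hBsymm]
    have := h (rm x) ⟨x, rfl⟩
    rw [key] at this
    exact neg_eq_zero.mp this
end

section
/- With the factorizable Lie bialgebra hypotheses, let σ : g → g be a Lie algebra automorphism such that σ ∘ r = r ∘ σ and ⟨σ x, σ y⟩ = ⟨x, y⟩ for all x, y ∈ g. Define T : g ⊕ g → g ⊕ g by T(x, x') = (σ^{-1} x, x') and the twisted operator ^σ r_d := T ∘ r_d ∘ T^{-1}, where r_d(x, x') = (r x − 2 r_+ x', 2 r_− x − r x'). Then ^σ r_d is given explicitly by ^σ r_d(x, x') = (r x − 2 σ^{-1} r_+ x', 2 r_− σ x − r x'), it is skew-symmetric with respect to the form ⟨⟨(x, x'), (y, y')⟩⟩ = ⟨x, y⟩ − ⟨x', y'⟩, and it satisfies the modified classical Yang–Baxter equation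 on the Lie algebra g ⊕ g with componentwise bracket. -/
/-- Let `σ` be a Lie algebra automorphism of `g` commuting with `r` and
preserving the form.  With `T(x,x') = (σ⁻¹ x, x')` and `^σr_d := T ∘ r_d ∘ T⁻¹`, the
twisted operator is given explicitly by
`^σr_d(x,x') = (r x − 2 σ⁻¹ r_+ x', 2 r_− σ x − r x')`, it is skew with respect to
`⟨⟨(x,x'),(y,y')⟩⟩ = ⟨x,y⟩ − ⟨x',y'⟩`, and it satisfies the modified classical
Yang–Baxter equation on `g ⊕ g` with the componentwise bracket. -/
theorem twisted_r_matrix_of_double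
    {g : Type*} [LieRing g] [LieAlgebra ℂ g]
    (B : g →ₗ[ℂ] g →ₗ[ℂ] ℂ)
    (hBsymm : ∀ x y : g, B x y = B y x)
    (hBnondeg : ∀ x : g, (∀ y : g, B x y = 0) → x = 0)
    (hBinv : ∀ x y z : g, B ⁅x, y⁆ z = B x ⁅y, z⁆)
    (r : g →ₗ[ℂ] g)
    (hrskew : ∀ x y : g, B (r x) y = - B x (r y))
    (hCYBE : ∀ x y : g, ⁅r x, r y⁆ - r (⁅r x, y⁆ + ⁅x, r y⁆) = -⁅x, y⁆)
    -- σ is a Lie algebra automorphism commuting with r and preserving the form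
    (σ : g ≃ₗ[ℂ] g)
    (hσbr : ∀ x y : g, σ ⁅x, y⁆ = ⁅σ x, σ y⁆)
    (hσr : ∀ x : g, σ (r x) = r (σ x))
    (hσB : ∀ x y : g, B (σ x) (σ y) = B x y) :
    let rp : g →ₗ[ℂ] g := ((1 : ℂ)/2) • (r + LinearMap.id)
    let rm : g →ₗ[ℂ] g := ((1 : ℂ)/2) • (r - LinearMap.id)
    -- the componentwise Lie bracket of d = g ⊕ g
    let brD : g × g → g × g → g × g := fun u v => (⁅u.1, v.1⁆, ⁅u.2, v.2⁆)
    -- the scalar product on d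
    let BB : g × g → g × g → ℂ := fun u v => B u.1 v.1 - B u.2 v.2
    -- the r-matrix of the double
    let rd : g × g → g × g := fun u => (r u.1 - 2 • rp u.2, 2 • rm u.1 - r u.2)
    -- T(x,x') = (σ⁻¹ x, x') and the twisted r-matrix ^σr_d = T ∘ r_d ∘ T⁻¹
    let T : g × g → g × g := fun u => (σ.symm u.1, u.2)
    let Tinv : g × g → g × g := fun u => (σ u.1, u.2)
    let rdσ : g × g → g × g := fun u => T (rd (Tinv u))
    -- explicit formula
    (∀ u : g × g, rdσ u = (r u.1 - 2 • σ.symm (rp u.2), 2 • rm (σ u.1) - r u.2)) ∧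
    -- skew symmetry with respect to ⟨⟨·,·⟩⟩
    (∀ u v : g × g, BB (rdσ u) v = - BB u (rdσ v)) ∧
    -- modified classical Yang--Baxter equation on d
    (∀ u v : g × g,
      brD (rdσ u) (rdσ v) - rdσ (brD (rdσ u) v + brD u (rdσ v)) = - brD u v) := by
  intro rp rm brD BB rd T Tinv rdσ
  -- basic scalar facts
  have h2p : ∀ x : g, (2 : ℕ) • rp x = r x + x := by
    intro x
    simp only [rp, LinearMap.smul_apply, LinearMap.add_apply, LinearMap.id_coe, id_eq]
    rw [← Nat.cast_smul_eq_nsmul ℂ, smul_smul]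
    norm_num
  have h2m : ∀ x : g, (2 : ℕ) • rm x = r x - x := by
    intro x
    simp only [rm, LinearMap.smul_apply, LinearMap.sub_apply, LinearMap.id_coe, id_eq]
    rw [← Nat.cast_smul_eq_nsmul ℂ, smul_smul]
    norm_num
  -- derived CYBE identity
  have hcybe' : ∀ x y : g, ⁅r x, r y⁆ = r ⁅r x, y⁆ + r ⁅x, r y⁆ - ⁅x, y⁆ := by
    intro x y
    have h := hCYBE x y
    rw [map_add] at h
    rw [sub_eq_iff_eq_add.mp h]
    abel
  -- symm facts
  have hσr' : ∀ x : g, σ.symm (r x) = r (σ.symm x) := by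
    intro x
    have := hσr (σ.symm x)
    rw [σ.apply_symm_apply] at this
    rw [← this, σ.symm_apply_apply]
  have hσbr' : ∀ x y : g, σ.symm ⁅x, y⁆ = ⁅σ.symm x, σ.symm y⁆ := by
    intro x y
    have := hσbr (σ.symm x) (σ.symm y)
    rw [σ.apply_symm_apply, σ.apply_symm_apply] at this
    rw [← this, σ.symm_apply_apply]
  have hBσ' : ∀ x y : g, B (σ.symm x) y = B x (σ y) := by
    intro x y
    have := hσB (σ.symm x) y
    rw [σ.apply_symm_apply] at this
    exact this.symm
  have hBσ'' : ∀ x y : g, B (σ x) y = B x (σ.symm y) := by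
    intro x y
    have := hσB x (σ.symm y)
    rwa [σ.apply_symm_apply] at this
  have hBpm : ∀ x y : g, B (rp x) y = - B x (rm y) := by
    intro x y
    simp only [rp, rm, LinearMap.smul_apply, LinearMap.add_apply, LinearMap.sub_apply,
      LinearMap.id_coe, id_eq, map_smul, map_add, map_sub, LinearMap.smul_apply,
      LinearMap.add_apply, LinearMap.sub_apply, smul_eq_mul, LinearMap.map_smul₂,
      LinearMap.map_add₂, LinearMap.map_sub₂]
    rw [hrskew x y]
    ring
  have hBmp : ∀ x y : g, B (rm x) y = - B x (rp y) := by
    intro x y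
    simp only [rp, rm, LinearMap.smul_apply, LinearMap.add_apply, LinearMap.sub_apply,
      LinearMap.id_coe, id_eq, map_smul, map_add, map_sub, smul_eq_mul,
      LinearMap.map_smul₂, LinearMap.map_add₂, LinearMap.map_sub₂]
    rw [hrskew x y]
    ring
  -- explicit formula
  have hform : ∀ u : g × g, rdσ u = (r u.1 - 2 • σ.symm (rp u.2), 2 • rm (σ u.1) - r u.2) := by
    intro u
    simp only [rdσ, T, Tinv, rd]
    refine Prod.ext ?_ rfl
    simp only [map_sub, map_nsmul, hσr', σ.symm_apply_apply]
  refine ⟨hform, ?_, ?_⟩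
  · -- skew symmetry
    intro u v
    simp only [hform, BB]
    simp only [map_sub, map_nsmul, LinearMap.sub_apply, LinearMap.smul_apply]
    have e1 := hrskew u.1 v.1
    have e2 : B (σ.symm (rp u.2)) v.1 = - B u.2 (rm (σ v.1)) := by
      rw [hBσ', hBpm]
    have e3 : B (rm (σ u.1)) v.2 = - B u.1 (σ.symm (rp v.2)) := by
      rw [hBmp, hBσ'']
    have e4 := hrskew u.2 v.2
    simp only [smul_eq_mul, nsmul_eq_mul, Nat.cast_ofNat] at *
    linear_combination e1 - 2 * e2 - 2 * e3 + e4
  · -- mCYBE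
    have hTbr : ∀ u v : g × g, brD (T u) (T v) = T (brD u v) := by
      intro u v; simp only [brD, T, hσbr']
    have hTibr : ∀ u v : g × g, brD (Tinv u) (Tinv v) = Tinv (brD u v) := by
      intro u v; simp only [brD, Tinv, hσbr]
    have hTTi : ∀ u : g × g, T (Tinv u) = u := by
      intro u; simp only [T, Tinv, σ.symm_apply_apply]
    have hTiT : ∀ u : g × g, Tinv (T u) = u := by
      intro u; simp only [T, Tinv, σ.apply_symm_apply]
    have hTiadd : ∀ u v : g × g, Tinv (u + v) = Tinv u + Tinv v := by
      intro u v; simp only [Tinv, Prod.fst_add, Prod.snd_add, map_add, Prod.mk_add_mk]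
    have hTsub : ∀ u v : g × g, T (u - v) = T u - T v := by
      intro u v; simp only [T, Prod.fst_sub, Prod.snd_sub, map_sub, Prod.mk_sub_mk]
    have hTneg : ∀ u : g × g, T (-u) = -T u := by
      intro u; simp only [T, Prod.fst_neg, Prod.snd_neg, map_neg, Prod.neg_mk]
    -- core: rd satisfies mCYBE
    have hrd : ∀ u v : g × g,
        brD (rd u) (rd v) - rd (brD (rd u) v + brD u (rd v)) = - brD u v := by
      intro u v
      have hrd1 : ∀ w : g × g, rd w = (r w.1 - (r w.2 + w.2), (r w.1 - w.1) - r w.2) := by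
        intro w; simp only [rd, h2p, h2m]
      simp only [hrd1, brD, Prod.fst_add, Prod.snd_add, Prod.mk_sub_mk, Prod.mk.injEq,
        neg_neg, Prod.neg_mk]
      constructor
      · simp only [lie_sub, sub_lie, lie_add, add_lie, map_add, map_sub, hcybe']
        abel
      · simp only [lie_sub, sub_lie, lie_add, add_lie, map_add, map_sub, hcybe']
        abel
    intro u v
    have key := hrd (Tinv u) (Tinv v)
    have e1 : brD (rdσ u) (rdσ v) = T (brD (rd (Tinv u)) (rd (Tinv v))) := hTbr _ _
    have e2 : brD (rdσ u) v = T (brD (rd (Tinv u)) (Tinv v)) := by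
      conv_lhs => rw [show v = T (Tinv v) from (hTTi v).symm]
      exact hTbr _ _
    have e3 : brD u (rdσ v) = T (brD (Tinv u) (rd (Tinv v))) := by
      conv_lhs => rw [show u = T (Tinv u) from (hTTi u).symm]
      exact hTbr _ _
    calc brD (rdσ u) (rdσ v) - rdσ (brD (rdσ u) v + brD u (rdσ v))
        = T (brD (rd (Tinv u)) (rd (Tinv v))) -
            T (rd (Tinv (T (brD (rd (Tinv u)) (Tinv v)) + T (brD (Tinv u) (rd (Tinv v)))))) := by
          rw [e1, e2, e3]
      _ = T (brD (rd (Tinv u)) (rd (Tinv v)) -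
            rd (brD (rd (Tinv u)) (Tinv v) + brD (Tinv u) (rd (Tinv v)))) := by
          rw [hTiadd, hTiT, hTiT, hTsub]
      _ = T (- brD (Tinv u) (Tinv v)) := by rw [key]
      _ = - brD u v := by rw [hTibr, hTneg, hTTi]
end

section
/- Let g be a Lie algebra over ℂ with a nondegenerate symmetric invariant bilinear form ⟨·,·⟩, decomposed as an internal direct sum of vector subspaces g = n ⊕ h ⊕ n̄, where n, n̄, h are Lie subalgebras, h is abelian, [h, n] ⊆ n, [h, n̄] ⊆ n̄, the subspaces n and n̄ are isotropic for ⟨·,·⟩, and h is orthogonal to both n and n̄. Let θ : h → h be a bijective linear map preserving ⟨·,·⟩ restricted to h and such that id − θ is bijective on h. Define r⁰ = (id + θ) ∘ (id − θ)^{-1} ∈ End(h) and ^θ r = P_n̄ − P_n + r⁰ ∘ P_h, where P_n, P_h, P_n̄ are the projections onto n, h, n̄ along the decomposition. Then ^θ r is skew-symmetric with respect to ⟨·,·⟩ and satisfies the modified classical Yang–Baxter equation [^θr x, ^θr y] − ^θr([^θr x, y] + [x, ^θr y]) = −[x, y]; hence (g, ^θ r) is a factorizable Lie bialgebra. -/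
/-- Let `g = n ⊕ h ⊕ n̄` with `n, h, n̄` Lie subalgebras, `h` abelian,
`[h,n] ⊆ n`, `[h,n̄] ⊆ n̄`, `n` and `n̄` isotropic, `h` orthogonal to `n` and `n̄`, and let
`θ : h → h` be bijective, form-preserving, with `id − θ` bijective on `h`.  Then
`^θr = P_n̄ − P_n + r⁰ ∘ P_h`, where `r⁰ = (id + θ)(id − θ)⁻¹` on `h` (characterized by
`r⁰(x − θ x) = x + θ x` for `x ∈ h`), is skew-symmetric and satisfies the modified
classical Yang–Baxter equation; hence `(g, ^θr)` is a factorizable Lie bialgebra. -/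
theorem theta_r_matrix_factorizable
    {g : Type*} [LieRing g] [LieAlgebra ℂ g]
    (B : g →ₗ[ℂ] g →ₗ[ℂ] ℂ)
    (hBsymm : ∀ x y : g, B x y = B y x)
    (hBnondeg : ∀ x : g, (∀ y : g, B x y = 0) → x = 0)
    (hBinv : ∀ x y z : g, B ⁅x, y⁆ z = B x ⁅y, z⁆)
    -- the subspaces n, h, n̄ and the associated projections
    (n h nb : Submodule ℂ g)
    (Pn Ph Pnb : g →ₗ[ℂ] g)
    (hPn : ∀ x : g, Pn x ∈ n) (hPh : ∀ x : g, Ph x ∈ h) (hPnb : ∀ x : g, Pnb x ∈ nb)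
    (hsum : ∀ x : g, Pn x + Ph x + Pnb x = x)
    (hProjn : ∀ x ∈ n, Pn x = x ∧ Ph x = 0 ∧ Pnb x = 0)
    (hProjh : ∀ x ∈ h, Pn x = 0 ∧ Ph x = x ∧ Pnb x = 0)
    (hProjnb : ∀ x ∈ nb, Pn x = 0 ∧ Ph x = 0 ∧ Pnb x = x)
    -- n, n̄ are Lie subalgebras, h is abelian, [h,n] ⊆ n, [h,n̄] ⊆ n̄
    (hnsub : ∀ x ∈ n, ∀ y ∈ n, ⁅x, y⁆ ∈ n)
    (hnbsub : ∀ x ∈ nb, ∀ y ∈ nb, ⁅x, y⁆ ∈ nb)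
    (hhab : ∀ x ∈ h, ∀ y ∈ h, ⁅x, y⁆ = (0 : g))
    (hhn : ∀ x ∈ h, ∀ y ∈ n, ⁅x, y⁆ ∈ n)
    (hhnb : ∀ x ∈ h, ∀ y ∈ nb, ⁅x, y⁆ ∈ nb)
    -- n, n̄ isotropic; h orthogonal to n and n̄
    (hniso : ∀ x ∈ n, ∀ y ∈ n, B x y = 0)
    (hnbiso : ∀ x ∈ nb, ∀ y ∈ nb, B x y = 0)
    (hhn0 : ∀ x ∈ h, ∀ y ∈ n, B x y = 0)
    (hhnb0 : ∀ x ∈ h, ∀ y ∈ nb, B x y = 0)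
    -- θ : h → h bijective, form-preserving, with id − θ bijective on h
    (θ : g →ₗ[ℂ] g)
    (hθh : ∀ x ∈ h, θ x ∈ h)
    (hθbij : ∀ y ∈ h, ∃! x, x ∈ h ∧ θ x = y)
    (hθB : ∀ x ∈ h, ∀ y ∈ h, B (θ x) (θ y) = B x y)
    (hθ1bij : ∀ y ∈ h, ∃! x, x ∈ h ∧ x - θ x = y)
    -- r⁰ = (id + θ)(id − θ)⁻¹ ∈ End h, the Cayley transform of θ
    (r0 : g →ₗ[ℂ] g)
    (hr0h : ∀ x ∈ h, r0 x ∈ h)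
    (hr0 : ∀ x ∈ h, r0 (x - θ x) = x + θ x) :
    -- ^θr = P_n̄ − P_n + r⁰ ∘ P_h
    let R : g →ₗ[ℂ] g := Pnb - Pn + r0 ∘ₗ Ph
    -- skew symmetry
    (∀ x y : g, B (R x) y = - B x (R y)) ∧
    -- modified classical Yang--Baxter equation
    (∀ x y : g, ⁅R x, R y⁆ - R (⁅R x, y⁆ + ⁅x, R y⁆) = -⁅x, y⁆) := by
  intro R
  have hRn : ∀ z ∈ n, R z = -z := by
    intro z hz
    obtain ⟨h1, h2, h3⟩ := hProjn z hz
    simp [R, h1, h2, h3]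
  have hRh : ∀ z ∈ h, R z = r0 z := by
    intro z hz
    obtain ⟨h1, h2, h3⟩ := hProjh z hz
    simp [R, h1, h2, h3]
  have hRnb : ∀ z ∈ nb, R z = z := by
    intro z hz
    obtain ⟨h1, h2, h3⟩ := hProjnb z hz
    simp [R, h1, h2, h3]
  have memswap : ∀ (s : Submodule ℂ g) (x y : g), ⁅x, y⁆ ∈ s → ⁅y, x⁆ ∈ s := by
    intro s x y hxy
    rw [← lie_skew]; exact s.neg_mem hxy
  constructor
  · -- skew symmetry
    have key : ∀ a b : g, (a ∈ n ∨ a ∈ h ∨ a ∈ nb) → (b ∈ n ∨ b ∈ h ∨ b ∈ nb) →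
        B (R a) b + B a (R b) = 0 := by
      rintro a b (ha | ha | ha) (hb | hb | hb)
      · rw [hRn a ha, hRn b hb]
        simp [hniso a ha b hb]
      · rw [hRn a ha, hRh b hb]
        have h1 : B a b = 0 := by rw [hBsymm]; exact hhn0 b hb a ha
        have h2 : B a (r0 b) = 0 := by rw [hBsymm]; exact hhn0 _ (hr0h b hb) a ha
        simp [h1, h2]
      · rw [hRn a ha, hRnb b hb]
        simp
      · rw [hRh a ha, hRn b hb]
        simp [hhn0 a ha b hb, hhn0 _ (hr0h a ha) b hb]
      · -- h × h : the Cayley transform computation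
        rw [hRh a ha, hRh b hb]
        obtain ⟨u, ⟨hu, hua⟩, -⟩ := hθ1bij a ha
        obtain ⟨v, ⟨hv, hvb⟩, -⟩ := hθ1bij b hb
        have h1 : r0 a = u + θ u := by rw [← hua]; exact hr0 u hu
        have h2 : r0 b = v + θ v := by rw [← hvb]; exact hr0 v hv
        rw [h1, h2, ← hua, ← hvb]
        have := hθB u hu v hv
        simp only [map_add, map_sub, LinearMap.add_apply, LinearMap.sub_apply]
        linear_combination (-2 : ℂ) * this
      · rw [hRh a ha, hRnb b hb]
        simp [hhnb0 a ha b hb, hhnb0 _ (hr0h a ha) b hb]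
      · rw [hRnb a ha, hRn b hb]
        simp
      · rw [hRnb a ha, hRh b hb]
        have h1 : B a b = 0 := by rw [hBsymm]; exact hhnb0 b hb a ha
        have h2 : B a (r0 b) = 0 := by rw [hBsymm]; exact hhnb0 _ (hr0h b hb) a ha
        simp [h1, h2]
      · rw [hRnb a ha, hRnb b hb]
        simp [hnbiso a ha b hb]
    intro x y
    have k11 := key (Pn x) (Pn y) (Or.inl (hPn x)) (Or.inl (hPn y))
    have k12 := key (Pn x) (Ph y) (Or.inl (hPn x)) (Or.inr (Or.inl (hPh y)))
    have k13 := key (Pn x) (Pnb y) (Or.inl (hPn x)) (Or.inr (Or.inr (hPnb y)))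
    have k21 := key (Ph x) (Pn y) (Or.inr (Or.inl (hPh x))) (Or.inl (hPn y))
    have k22 := key (Ph x) (Ph y) (Or.inr (Or.inl (hPh x))) (Or.inr (Or.inl (hPh y)))
    have k23 := key (Ph x) (Pnb y) (Or.inr (Or.inl (hPh x))) (Or.inr (Or.inr (hPnb y)))
    have k31 := key (Pnb x) (Pn y) (Or.inr (Or.inr (hPnb x))) (Or.inl (hPn y))
    have k32 := key (Pnb x) (Ph y) (Or.inr (Or.inr (hPnb x))) (Or.inr (Or.inl (hPh y)))
    have k33 := key (Pnb x) (Pnb y) (Or.inr (Or.inr (hPnb x))) (Or.inr (Or.inr (hPnb y)))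
    rw [← hsum x, ← hsum y]
    simp only [map_add, LinearMap.add_apply]
    linear_combination k11 + k12 + k13 + k21 + k22 + k23 + k31 + k32 + k33
  · -- mCYBE
    have key : ∀ a b : g, (a ∈ n ∨ a ∈ h ∨ a ∈ nb) → (b ∈ n ∨ b ∈ h ∨ b ∈ nb) →
        ⁅R a, R b⁆ = R ⁅R a, b⁆ + R ⁅a, R b⁆ - ⁅a, b⁆ := by
      rintro a b (ha | ha | ha) (hb | hb | hb)
      · rw [hRn a ha, hRn b hb]
        simp only [neg_lie, lie_neg, neg_neg, map_neg]
        rw [hRn _ (hnsub a ha b hb)]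
        abel
      · rw [hRn a ha, hRh b hb]
        have hab : ⁅a, b⁆ ∈ n := memswap n b a (hhn b hb a ha)
        have harb : ⁅a, r0 b⁆ ∈ n := memswap n (r0 b) a (hhn _ (hr0h b hb) a ha)
        simp only [neg_lie, map_neg]
        rw [hRn _ hab, hRn _ harb]
        abel
      · rw [hRn a ha, hRnb b hb]
        simp only [neg_lie, map_neg]
        abel
      · rw [hRh a ha, hRn b hb]
        have hab : ⁅a, b⁆ ∈ n := hhn a ha b hb
        have hrab : ⁅r0 a, b⁆ ∈ n := hhn _ (hr0h a ha) b hb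
        simp only [lie_neg, map_neg]
        rw [hRn _ hab, hRn _ hrab]
        abel
      · rw [hRh a ha, hRh b hb]
        rw [hhab a ha b hb, hhab _ (hr0h a ha) _ (hr0h b hb),
          hhab _ (hr0h a ha) b hb, hhab a ha _ (hr0h b hb)]
        simp
      · rw [hRh a ha, hRnb b hb]
        have hab : ⁅a, b⁆ ∈ nb := hhnb a ha b hb
        have hrab : ⁅r0 a, b⁆ ∈ nb := hhnb _ (hr0h a ha) b hb
        rw [hRnb _ hab, hRnb _ hrab]
        abel
      · rw [hRnb a ha, hRn b hb]
        simp only [lie_neg, map_neg]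
        abel
      · rw [hRnb a ha, hRh b hb]
        have hab : ⁅a, b⁆ ∈ nb := memswap nb b a (hhnb b hb a ha)
        have harb : ⁅a, r0 b⁆ ∈ nb := memswap nb (r0 b) a (hhnb _ (hr0h b hb) a ha)
        rw [hRnb _ hab, hRnb _ harb]
        abel
      · rw [hRnb a ha, hRnb b hb]
        rw [hRnb _ (hnbsub a ha b hb)]
        abel
    intro x y
    have k11 := key (Pn x) (Pn y) (Or.inl (hPn x)) (Or.inl (hPn y))
    have k12 := key (Pn x) (Ph y) (Or.inl (hPn x)) (Or.inr (Or.inl (hPh y)))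
    have k13 := key (Pn x) (Pnb y) (Or.inl (hPn x)) (Or.inr (Or.inr (hPnb y)))
    have k21 := key (Ph x) (Pn y) (Or.inr (Or.inl (hPh x))) (Or.inl (hPn y))
    have k22 := key (Ph x) (Ph y) (Or.inr (Or.inl (hPh x))) (Or.inr (Or.inl (hPh y)))
    have k23 := key (Ph x) (Pnb y) (Or.inr (Or.inl (hPh x))) (Or.inr (Or.inr (hPnb y)))
    have k31 := key (Pnb x) (Pn y) (Or.inr (Or.inr (hPnb x))) (Or.inl (hPn y))
    have k32 := key (Pnb x) (Ph y) (Or.inr (Or.inr (hPnb x))) (Or.inr (Or.inl (hPh y)))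
    have k33 := key (Pnb x) (Pnb y) (Or.inr (Or.inr (hPnb x))) (Or.inr (Or.inr (hPnb y)))
    rw [← hsum x, ← hsum y]
    simp only [map_add, lie_add, add_lie]
    rw [k11, k12, k13, k21, k22, k23, k31, k32, k33]
    abel
end

section
/- In the setting of the r-matrix ^θ r = P_n̄ − P_n + r⁰ ∘ P_h on g = n ⊕ h ⊕ n̄ (with θ : h → h bijective, form-preserving, id − θ bijective), set r_± = (1/2)(^θ r ± id). Then Ker r_+ = n, Ker r_− = n̄, Im r_+ = h ⊕ n̄, Im r_− = n ⊕ h, and for every X ∈ g one has P_h(r_− X) = θ(P_h(r_+ X)); that is, in the notation of the Belavin–Drinfeld theorem, b_− = n ⊕ h, b_+ = h ⊕ n̄, n_− = n, n_+ = n̄, and the Belavin–Drinfeld isomorphism b_−/n_− → b_+/n_+ is induced by θ on h. -/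
/-- In the setting of the r-matrix `^θr = P_n̄ − P_n + r⁰ ∘ P_h` on
`g = n ⊕ h ⊕ n̄`, with `r_± = (1/2)(^θr ± id)` one has `Ker r_+ = n`, `Ker r_− = n̄`,
`Im r_+ = h ⊕ n̄`, `Im r_− = n ⊕ h`, and `P_h (r_− X) = θ (P_h (r_+ X))` for every `X`;
that is, `b_− = n ⊕ h`, `b_+ = h ⊕ n̄`, `n_− = n`, `n_+ = n̄`, and the Belavin–Drinfeld
isomorphism `b_−/n_− → b_+/n_+` is induced by `θ` on `h`. -/
theorem theta_r_matrix_kernels_ranges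
    {g : Type*} [LieRing g] [LieAlgebra ℂ g]
    (B : g →ₗ[ℂ] g →ₗ[ℂ] ℂ)
    (hBsymm : ∀ x y : g, B x y = B y x)
    (hBnondeg : ∀ x : g, (∀ y : g, B x y = 0) → x = 0)
    (hBinv : ∀ x y z : g, B ⁅x, y⁆ z = B x ⁅y, z⁆)
    -- the subspaces n, h, n̄ and the associated projections
    (n h nb : Submodule ℂ g)
    (Pn Ph Pnb : g →ₗ[ℂ] g)
    (hPn : ∀ x : g, Pn x ∈ n) (hPh : ∀ x : g, Ph x ∈ h) (hPnb : ∀ x : g, Pnb x ∈ nb)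
    (hsum : ∀ x : g, Pn x + Ph x + Pnb x = x)
    (hProjn : ∀ x ∈ n, Pn x = x ∧ Ph x = 0 ∧ Pnb x = 0)
    (hProjh : ∀ x ∈ h, Pn x = 0 ∧ Ph x = x ∧ Pnb x = 0)
    (hProjnb : ∀ x ∈ nb, Pn x = 0 ∧ Ph x = 0 ∧ Pnb x = x)
    -- n, n̄ are Lie subalgebras, h is abelian, [h,n] ⊆ n, [h,n̄] ⊆ n̄
    (hnsub : ∀ x ∈ n, ∀ y ∈ n, ⁅x, y⁆ ∈ n)
    (hnbsub : ∀ x ∈ nb, ∀ y ∈ nb, ⁅x, y⁆ ∈ nb)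
    (hhab : ∀ x ∈ h, ∀ y ∈ h, ⁅x, y⁆ = (0 : g))
    (hhn : ∀ x ∈ h, ∀ y ∈ n, ⁅x, y⁆ ∈ n)
    (hhnb : ∀ x ∈ h, ∀ y ∈ nb, ⁅x, y⁆ ∈ nb)
    -- n, n̄ isotropic; h orthogonal to n and n̄
    (hniso : ∀ x ∈ n, ∀ y ∈ n, B x y = 0)
    (hnbiso : ∀ x ∈ nb, ∀ y ∈ nb, B x y = 0)
    (hhn0 : ∀ x ∈ h, ∀ y ∈ n, B x y = 0)
    (hhnb0 : ∀ x ∈ h, ∀ y ∈ nb, B x y = 0)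
    -- θ : h → h bijective, form-preserving, with id − θ bijective on h
    (θ : g →ₗ[ℂ] g)
    (hθh : ∀ x ∈ h, θ x ∈ h)
    (hθbij : ∀ y ∈ h, ∃! x, x ∈ h ∧ θ x = y)
    (hθB : ∀ x ∈ h, ∀ y ∈ h, B (θ x) (θ y) = B x y)
    (hθ1bij : ∀ y ∈ h, ∃! x, x ∈ h ∧ x - θ x = y)
    -- r⁰ = (id + θ)(id − θ)⁻¹ ∈ End h, the Cayley transform of θ
    (r0 : g →ₗ[ℂ] g)
    (hr0h : ∀ x ∈ h, r0 x ∈ h)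
    (hr0 : ∀ x ∈ h, r0 (x - θ x) = x + θ x) :
    let R : g →ₗ[ℂ] g := Pnb - Pn + r0 ∘ₗ Ph
    let rp : g →ₗ[ℂ] g := ((1 : ℂ)/2) • (R + LinearMap.id)
    let rm : g →ₗ[ℂ] g := ((1 : ℂ)/2) • (R - LinearMap.id)
    -- kernels:  n_− = n,  n_+ = n̄
    LinearMap.ker rp = n ∧
    LinearMap.ker rm = nb ∧
    -- ranges:  b_+ = h ⊕ n̄,  b_− = n ⊕ h
    LinearMap.range rp = h ⊔ nb ∧
    LinearMap.range rm = n ⊔ h ∧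
    -- the Belavin–Drinfeld isomorphism is induced by θ on h
    (∀ X : g, Ph (rm X) = θ (Ph (rp X))) := by
  intro R rp rm
  have hRapp : ∀ X : g, R X = Pnb X - Pn X + r0 (Ph X) := fun X => rfl
  have hrpapp : ∀ X : g, rp X = ((1:ℂ)/2) • (R X + X) := fun X => rfl
  have hrmapp : ∀ X : g, rm X = ((1:ℂ)/2) • (R X - X) := fun X => rfl
  -- action on the components
  have hn_rp : ∀ x ∈ n, rp x = 0 := by
    intro x hx
    obtain ⟨h1, h2, h3⟩ := hProjn x hx
    rw [hrpapp, hRapp, h1, h2, h3, map_zero]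
    module
  have hn_rm : ∀ x ∈ n, rm x = -x := by
    intro x hx
    obtain ⟨h1, h2, h3⟩ := hProjn x hx
    rw [hrmapp, hRapp, h1, h2, h3, map_zero]
    module
  have hnb_rp : ∀ x ∈ nb, rp x = x := by
    intro x hx
    obtain ⟨h1, h2, h3⟩ := hProjnb x hx
    rw [hrpapp, hRapp, h1, h2, h3, map_zero]
    module
  have hnb_rm : ∀ x ∈ nb, rm x = 0 := by
    intro x hx
    obtain ⟨h1, h2, h3⟩ := hProjnb x hx
    rw [hrmapp, hRapp, h1, h2, h3, map_zero]
    module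
  have hh_r : ∀ x ∈ h, ∀ y, y ∈ h → y - θ y = x → rp x = y ∧ rm x = θ y := by
    intro x hx y hy hyx
    obtain ⟨h1, h2, h3⟩ := hProjh x hx
    have hr : r0 x = y + θ y := by rw [← hyx]; exact hr0 y hy
    constructor
    · rw [hrpapp, hRapp, h3, h1, h2, hr, ← hyx]; module
    · rw [hrmapp, hRapp, h3, h1, h2, hr, ← hyx]; module
  -- key decomposition
  have key : ∀ X : g, ∃ y, y ∈ h ∧ y - θ y = Ph X ∧ rp X = Pnb X + y ∧
      rm X = θ y - Pn X := by
    intro X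
    obtain ⟨y, ⟨hy, hyθ⟩, -⟩ := hθ1bij (Ph X) (hPh X)
    refine ⟨y, hy, hyθ, ?_, ?_⟩
    · have hsplit : rp X = rp (Pn X) + rp (Ph X) + rp (Pnb X) := by
        rw [← map_add, ← map_add, hsum]
      rw [hsplit, hn_rp _ (hPn X), (hh_r _ (hPh X) y hy hyθ).1, hnb_rp _ (hPnb X)]
      abel
    · have hsplit : rm X = rm (Pn X) + rm (Ph X) + rm (Pnb X) := by
        rw [← map_add, ← map_add, hsum]
      rw [hsplit, hn_rm _ (hPn X), (hh_r _ (hPh X) y hy hyθ).2, hnb_rm _ (hPnb X)]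
      abel
  refine ⟨?_, ?_, ?_, ?_, ?_⟩
  · -- ker rp = n
    apply le_antisymm
    · intro x hx
      rw [LinearMap.mem_ker] at hx
      obtain ⟨y, hy, hyθ, hrpx, -⟩ := key x
      rw [hrpx] at hx
      have hPnb0 : Pnb x = 0 := by
        have h4 := congrArg Pnb hx
        rw [map_add, (hProjnb _ (hPnb x)).2.2, (hProjh y hy).2.2, map_zero] at h4
        simpa using h4
      have hy0 : y = 0 := by rwa [hPnb0, zero_add] at hx
      have hPh0 : Ph x = 0 := by rw [← hyθ, hy0, map_zero, sub_zero]
      have h5 := hsum x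
      rw [hPh0, hPnb0, add_zero, add_zero] at h5
      rw [← h5]
      exact hPn x
    · intro x hx
      rw [LinearMap.mem_ker]
      exact hn_rp x hx
  · -- ker rm = nb
    apply le_antisymm
    · intro x hx
      rw [LinearMap.mem_ker] at hx
      obtain ⟨y, hy, hyθ, -, hrmx⟩ := key x
      rw [hrmx] at hx
      have hPn0 : Pn x = 0 := by
        have h4 := congrArg Pn hx
        rw [map_sub, (hProjh _ (hθh y hy)).1, (hProjn _ (hPn x)).1, map_zero] at h4
        simpa using h4
      have hθy0 : θ y = 0 := by rwa [hPn0, sub_zero] at hx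
      have hy0 : y = 0 := by
        obtain ⟨w, -, huniq⟩ := hθbij 0 h.zero_mem
        have e1 := huniq y ⟨hy, hθy0⟩
        have e2 := huniq 0 ⟨h.zero_mem, map_zero θ⟩
        rw [e1, e2]
      have hPh0 : Ph x = 0 := by rw [← hyθ, hy0, map_zero, sub_zero]
      have h5 := hsum x
      rw [hPh0, hPn0, add_zero, zero_add] at h5
      rw [← h5]
      exact hPnb x
    · intro x hx
      rw [LinearMap.mem_ker]
      exact hnb_rm x hx
  · -- range rp = h ⊔ nb
    apply le_antisymm
    · rintro _ ⟨X, rfl⟩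
      obtain ⟨y, hy, -, hrpx, -⟩ := key X
      rw [hrpx]
      exact Submodule.add_mem _ (Submodule.mem_sup_right (hPnb X))
        (Submodule.mem_sup_left hy)
    · rw [sup_le_iff]
      constructor
      · intro z hz
        have hz' : z - θ z ∈ h := h.sub_mem hz (hθh z hz)
        exact ⟨z - θ z, (hh_r _ hz' z hz rfl).1⟩
      · intro z hz
        exact ⟨z, hnb_rp z hz⟩
  · -- range rm = n ⊔ h
    apply le_antisymm
    · rintro _ ⟨X, rfl⟩
      obtain ⟨y, hy, -, -, hrmx⟩ := key X
      rw [hrmx]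
      exact Submodule.sub_mem _ (Submodule.mem_sup_right (hθh y hy))
        (Submodule.mem_sup_left (hPn X))
    · rw [sup_le_iff]
      constructor
      · intro z hz
        refine ⟨-z, ?_⟩
        rw [hn_rm (-z) (n.neg_mem hz), neg_neg]
      · intro z hz
        obtain ⟨w, ⟨hw, hwz⟩, -⟩ := hθbij z hz
        have hw' : w - θ w ∈ h := h.sub_mem hw (hθh w hw)
        exact ⟨w - θ w, by rw [(hh_r _ hw' w hw rfl).2, hwz]⟩
  · -- Ph (rm X) = θ (Ph (rp X))
    intro X
    obtain ⟨y, hy, -, hrpx, hrmx⟩ := key X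
    rw [hrpx, hrmx, map_add, map_sub, (hProjnb _ (hPnb X)).2.1, (hProjh y hy).2.1,
      (hProjh _ (hθh y hy)).2.1, (hProjn _ (hPn X)).2.1]
    simp
end
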